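/- For every finite abelian group K, D(Z_2 ⊕ Z_2 ⊕ Z_2 ⊕ K) ≤ 2·D(K) + 3. -/

import Mathlib

/-!
Split `(ℤ/2)³ ⊕ K` as `V × K` with `V = (ℤ/2)³`. Any `2t + 3` elements of `V` contain `t` disjoint
nonempty zero-sum blocks: peel off a `0` or a repeated pair `v, v`, and when neither occurs the
elements are distinct and nonzero, so there are at most seven of them, and the few cases left
(`t ≤ 2`) are settled by a finite check. Given `2 D(K) + 3` elements of `V × K`, the `V`-parts
yield `D(K)` disjoint blocks with zero `V`-sum; their `K`-sums form a sequence of length `D(K)` in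
`K`, which has a nonempty zero-sum subsequence, and the union of the corresponding blocks is a
nonempty zero-sum subsequence of the original sequence.
-/

/-- The Davenport constant: the smallest `d` such that every multiset of `d`
elements of `G` contains a nonempty zero-sum sub-multiset. -/
noncomputable def davenport (G : Type*) [AddCommGroup G] : ℕ :=
  sInf {d | ∀ S : Multiset G, Multiset.card S = d →
    ∃ T, T ≤ S ∧ T ≠ 0 ∧ T.sum = 0}

namespace Multiset

variable {α β : Type*} {f : α → β}

theorem exists_eq_add_of_map_eq_add {s : Multiset α} {t₁ t₂ : Multiset β}
    (h : s.map f = t₁ + t₂) : ∃ s₁ s₂, s = s₁ + s₂ ∧ s₁.map f = t₁ ∧ s₂.map f = t₂ := by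
  classical
  induction t₁ using Multiset.induction generalizing s with
  | empty => exact ⟨0, s, by simp, by simp, by simpa using h⟩
  | cons b t₁ ih =>
    obtain ⟨a, ha, rfl, hmap⟩ := (map_eq_cons f s _ b).mpr (by rw [h, cons_add])
    obtain ⟨s₁, s₂, hs, rfl, rfl⟩ := ih hmap
    refine ⟨a ::ₘ s₁, s₂, ?_, by simp, rfl⟩
    rw [cons_add, ← hs, cons_erase ha]

theorem exists_le_map_eq_of_le_map {s : Multiset α} {t : Multiset β} (h : t ≤ s.map f) :
    ∃ u ≤ s, u.map f = t := by
  obtain ⟨c, hc⟩ := le_iff_exists_add.mp h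
  obtain ⟨u, v, rfl, hu, -⟩ := exists_eq_add_of_map_eq_add hc
  exact ⟨u, le_add_right u v, hu⟩

theorem exists_sum_le_map_map_eq_of_sum_le_map {s : Multiset α} {L : Multiset (Multiset β)}
    (h : L.sum ≤ s.map f) : ∃ L' : Multiset (Multiset α), L'.sum ≤ s ∧ L'.map (map f) = L := by
  induction L using Multiset.induction generalizing s with
  | empty => exact ⟨0, by simp, rfl⟩
  | cons B L ih =>
    obtain ⟨u, hus, hu⟩ := exists_le_map_eq_of_le_map h
    obtain ⟨u₁, u₂, rfl, rfl, hu₂⟩ := exists_eq_add_of_map_eq_add (by simpa using hu)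
    obtain ⟨L', hL', rfl⟩ := ih hu₂.ge
    exact ⟨u₁ ::ₘ L', by simpa using (add_le_add_right hL' u₁).trans hus, by simp⟩

end Multiset

open Multiset

section ZeroSums

variable {G H K : Type*} [AddCommGroup G] [AddCommGroup H] [AddCommGroup K]

def HasZeroSumSubmultiset (S : Multiset G) : Prop :=
  ∃ T ≤ S, T ≠ 0 ∧ T.sum = 0

/-- The blocks `B ∈ L` are disjoint sub-multisets of `S` in the sense that `L.sum ≤ S`. -/
def HasDisjointZeroSums (S : Multiset G) (t : ℕ) : Prop :=
  ∃ L : Multiset (Multiset G), card L = t ∧ L.sum ≤ S ∧ ∀ B ∈ L, B ≠ 0 ∧ B.sum = 0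

theorem HasZeroSumSubmultiset.map {S : Multiset G} (h : HasZeroSumSubmultiset S) (f : G →+ H) :
    HasZeroSumSubmultiset (S.map f) := by
  obtain ⟨T, hTS, hT, hT0⟩ := h
  refine ⟨T.map f, map_le_map hTS, by simpa using hT, ?_⟩
  rw [← map_multiset_sum, hT0, _root_.map_zero]

theorem forall_card_eq_hasZeroSumSubmultiset_congr (e : G ≃+ H) {d : ℕ}
    (h : ∀ S : Multiset G, card S = d → HasZeroSumSubmultiset S) :
    ∀ S : Multiset H, card S = d → HasZeroSumSubmultiset S := fun S hS => by
  simpa [Multiset.map_map] using (h (S.map e.symm) (by simpa using hS)).map e.toAddMonoidHom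

theorem davenport_congr (e : G ≃+ H) : davenport G = davenport H := by
  unfold davenport
  congr 1
  ext d
  exact ⟨forall_card_eq_hasZeroSumSubmultiset_congr e,
    forall_card_eq_hasZeroSumSubmultiset_congr e.symm⟩

theorem hasZeroSumSubmultiset_of_card_le [Finite K] {S : Multiset K} (hS : Nat.card K ≤ card S) :
    HasZeroSumSubmultiset S := by
  classical
  have : Fintype K := Fintype.ofFinite K
  set l := S.toList
  have hl : Nat.card K < l.length + 1 := by simpa [l] using Nat.lt_succ_of_le hS
  -- pigeonhole on the `l.length + 1` prefix sums
  obtain ⟨i, j, hij, hsum⟩ := Fintype.exists_ne_map_eq_of_card_lt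
    (fun i : Fin (l.length + 1) => (l.take i).sum) (by simpa [Nat.card_eq_fintype_card] using hl)
  wlog hlt : (i : ℕ) < j generalizing i j
  · exact this j i hij.symm hsum.symm (by omega)
  have hpre : ((l.take i : List K) : Multiset K) ≤ l.take j :=
    coe_le.mpr (List.take_sublist_take_left hlt.le).subperm
  refine ⟨((l.take j : List K) : Multiset K) - l.take i, ?_, ?_, ?_⟩
  · calc ((l.take j : List K) : Multiset K) - l.take i ≤ l.take j := tsub_le_self
      _ ≤ (l : Multiset K) := coe_le.mpr (List.take_sublist _ _).subperm
      _ = S := coe_toList S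
  · rw [← card_pos, card_sub hpre]
    simp only [coe_card, List.length_take]
    omega
  · have := congrArg Multiset.sum (tsub_add_cancel_of_le hpre)
    rw [sum_add, sum_coe, sum_coe, hsum] at this
    exact add_eq_right.mp this

theorem exists_zero_sum_of_card_eq_davenport [Finite K] {S : Multiset K}
    (hS : card S = davenport K) : HasZeroSumSubmultiset S :=
  Nat.sInf_mem (s := {d | ∀ S : Multiset K, card S = d → HasZeroSumSubmultiset S})
    ⟨Nat.card K, fun _ hS => hasZeroSumSubmultiset_of_card_le hS.ge⟩ S hS

theorem hasDisjointZeroSums_zero (S : Multiset G) : HasDisjointZeroSums S 0 :=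
  ⟨0, rfl, by simp, by simp⟩

theorem HasDisjointZeroSums.mono {S S' : Multiset G} {t : ℕ} (h : HasDisjointZeroSums S t)
    (hSS' : S ≤ S') : HasDisjointZeroSums S' t := by
  obtain ⟨L, hL, hLS, hB⟩ := h
  exact ⟨L, hL, hLS.trans hSS', hB⟩

theorem HasDisjointZeroSums.add_block {S B : Multiset G} {t : ℕ} (h : HasDisjointZeroSums S t)
    (hB : B ≠ 0) (hB0 : B.sum = 0) : HasDisjointZeroSums (B + S) (t + 1) := by
  obtain ⟨L, hL, hLS, hblocks⟩ := h
  refine ⟨B ::ₘ L, by simp [hL], by simpa using add_le_add_right hLS B, ?_⟩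
  simpa [hB, hB0] using hblocks

theorem davenport_prod_le [Finite K] {n : ℕ}
    (h : ∀ S : Multiset H, card S = n → HasDisjointZeroSums S (davenport K)) :
    davenport (H × K) ≤ n := by
  classical
  refine Nat.sInf_le fun S hS => ?_
  obtain ⟨L, hLcard, hLS, hL⟩ := h (S.map Prod.fst) (by simpa using hS)
  obtain ⟨L', hL'S, rfl⟩ := exists_sum_le_map_map_eq_of_sum_le_map hLS
  have hblocks : ∀ B ∈ L', B ≠ 0 ∧ B.sum.1 = 0 := fun B hB => by
    simpa [fst_sum] using hL _ (mem_map_of_mem _ hB)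
  obtain ⟨T, hTL', hT, hT0⟩ :=
    exists_zero_sum_of_card_eq_davenport (S := L'.map fun B => B.sum.2) (by simpa using hLcard)
  obtain ⟨L'', hL''L', rfl⟩ := exists_le_map_eq_of_le_map hTL'
  have hsum_le : L''.sum ≤ L'.sum := by
    obtain ⟨C, rfl⟩ := Multiset.le_iff_exists_add.mp hL''L'
    simp
  refine ⟨L''.sum, hsum_le.trans hL'S, ?_, ?_⟩
  · obtain ⟨B, hB⟩ := exists_mem_of_ne_zero (by simpa using hT)
    exact ne_bot_of_le_ne_bot (hblocks B (mem_of_le hL''L' hB)).1 (le_sum_of_mem hB)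
  · rw [← join, sum_join]
    refine Prod.ext ?_ (by simpa [snd_sum, Multiset.map_map] using hT0)
    rw [fst_sum, Multiset.map_map]
    exact sum_eq_zero fun x hx => by
      obtain ⟨B, hB, rfl⟩ := mem_map.mp hx
      exact (hblocks B (mem_of_le hL''L' hB)).2

end ZeroSums

section ZModTwoCube

local notation "V" => ZMod 2 × ZMod 2 × ZMod 2

set_option maxRecDepth 10000

theorem card_le_seven_of_zero_notMem : ∀ s : Finset V, 0 ∉ s → s.card ≤ 7 := by
  decide

theorem exists_zero_sum_subset_of_four_le_card :
    ∀ s : Finset V, 4 ≤ s.card → ∃ F ∈ s.powerset, F.val ≠ 0 ∧ F.val.sum = 0 := by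
  decide

-- `s` is then all of `V \ {0}`, whose sum is `0`: take for `F` a line `{a, b, a + b}`.
set_option synthInstance.maxSize 1024 in
theorem exists_zero_sum_halves_of_card_eq_seven : ∀ s : Finset V, 0 ∉ s → s.card = 7 →
    ∃ F ∈ s.powerset, F.val ≠ 0 ∧ (s \ F).val ≠ 0 ∧ F.val.sum = 0 ∧ (s \ F).val.sum = 0 := by
  decide

theorem hasDisjointZeroSums_of_nodup {S : Multiset V} {t : ℕ} (hS : S.Nodup) (h0 : 0 ∉ S)
    (ht : 2 * t + 3 ≤ card S) : HasDisjointZeroSums S t := by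
  let s : Finset V := ⟨S, hS⟩
  have hs : s.card = card S := rfl
  have h7 := card_le_seven_of_zero_notMem s h0
  obtain rfl | rfl | rfl : t = 0 ∨ t = 1 ∨ t = 2 := by omega
  · exact hasDisjointZeroSums_zero S
  · obtain ⟨F, hFs, hF, hF0⟩ := exists_zero_sum_subset_of_four_le_card s (by omega)
    have hFS : F.val ≤ S := Finset.val_le_iff.mpr (Finset.mem_powerset.mp hFs)
    exact ((hasDisjointZeroSums_zero 0).add_block hF hF0).mono (by simpa using hFS)
  · obtain ⟨F, hFs, hF, hsF, hF0, hsF0⟩ := exists_zero_sum_halves_of_card_eq_seven s h0 (by omega)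
    have h2 := ((hasDisjointZeroSums_zero 0).add_block hsF hsF0).add_block hF hF0
    rw [add_zero, Finset.sdiff_val,
      add_tsub_cancel_of_le (Finset.val_le_iff.mpr (Finset.mem_powerset.mp hFs))] at h2
    exact h2

theorem hasDisjointZeroSums_of_two_mul_add_three_le_card (t : ℕ) (S : Multiset V)
    (ht : 2 * t + 3 ≤ card S) : HasDisjointZeroSums S t := by
  induction t generalizing S with
  | zero => exact hasDisjointZeroSums_zero S
  | succ t ih =>
    by_cases h0 : (0 : V) ∈ S
    · rw [← cons_erase h0, ← singleton_add]
      refine (ih _ ?_).add_block (by simp) (by simp)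
      rw [card_erase_of_mem h0, Nat.pred_eq_sub_one]
      omega
    by_cases hS : S.Nodup
    · exact hasDisjointZeroSums_of_nodup hS h0 ht
    obtain ⟨v, S', rfl⟩ : ∃ v S', S = v ::ₘ v ::ₘ S' := by
      simpa [nodup_iff_ne_cons_cons] using hS
    have hpair : ({v, v} : Multiset V).sum = 0 := by simpa using CharTwo.add_self_eq_zero v
    simpa using (ih S' (by simp at ht; omega)).add_block (B := {v, v}) (by simp) hpair

end ZModTwoCube

theorem davenport_z2cube_K (K : Type*) [AddCommGroup K] [Fintype K] :
    davenport (ZMod 2 × ZMod 2 × ZMod 2 × K) ≤ 2 * davenport K + 3 := by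
  let e : (ZMod 2 × ZMod 2 × ZMod 2) × K ≃+ ZMod 2 × ZMod 2 × ZMod 2 × K :=
    AddEquiv.prodAssoc.trans (AddEquiv.prodCongr (AddEquiv.refl _) AddEquiv.prodAssoc)
  rw [← davenport_congr e]
  exact davenport_prod_le fun S hS =>
    hasDisjointZeroSums_of_two_mul_add_three_le_card _ S hS.ge
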